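/- Let m ≥ 3, let P be a symmetric 2-index array on ℝ^m and let v ∈ ℝ^m with v ≠ 0. Then D(P,v) = 0 (all components vanish) if and only if both of the following hold: (i) v is an eigenvector of P, i.e. there exists μ ∈ ℝ with Σ_l P_{il}v_l = μ·v_i for all i; and (ii) for all x, y ∈ ℝ^m orthogonal to v one has Σ_{i,j} P_{ij}x_i y_j = τ·⟨x,y⟩, where τ = ((Σ_l P_{ll}) − (Σ_{l,k} P_{lk}v_l v_k)/|v|²)/(m−1). -/

import Mathlib

/-- The Kronecker delta on `Fin m`, regarded as a real 2-index array. -/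
def kdelta (m : ℕ) (i j : Fin m) : ℝ := if i = j then 1 else 0

/-- The 3-index array `D(P,v)` associated with a 2-index array `P` and a vector `v`:
`D(P,v)_{ijk} = (1/(m−2))·[ v_k P_{ij} − v_j P_{ik}
  + (1/(m−1))·Σ_l v_l (P_{lk}δ_{ij} − P_{lj}δ_{ik})
  − ((Σ_l P_{ll})/(m−1))·(v_kδ_{ij} − v_jδ_{ik}) ]`. -/
noncomputable def Dt (m : ℕ) (P : Fin m → Fin m → ℝ) (v : Fin m → ℝ)
    (i j k : Fin m) : ℝ :=
  (1 / ((m : ℝ) - 2)) *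
    (v k * P i j - v j * P i k
      + (1 / ((m : ℝ) - 1)) * ∑ l, v l * (P l k * kdelta m i j - P l j * kdelta m i k)
      - ((∑ l, P l l) / ((m : ℝ) - 1)) * (v k * kdelta m i j - v j * kdelta m i k))

/-!
Both sides of the equivalence say that `P = a • 1 + b • vecMulVec v v` for some reals `a, b`.

If `D(P,v) = 0`, contracting the bracket of `D` with `v` in its middle index expresses `|v|² P`
through `Pv`, `v` and the identity; the antisymmetric part of that identity is proportional to
`(m - 2) (v ⊗ Pv - Pv ⊗ v)`, so symmetry of `P` forces `Pv ∥ v` and then `P` has the above form.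
Conversely, for such `P` the bracket of `D` is a multiple of `v_k δ_{ij} - v_j δ_{ik}` whose
coefficient vanishes identically.

Conditions (i) and (ii) fix the bilinear form of `P` on the line of `v` and on `v⊥`, and the
symmetry of `P` kills the mixed terms, so `P = τ • 1 + ((μ - τ) / |v|²) • vecMulVec v v`;
conversely, taking the trace and `⟨v, P v⟩` of `a • 1 + b • vecMulVec v v` recovers `τ = a`.
-/

open Matrix

lemma sum_sum_mul_mul_eq_dotProduct_mulVec {n R : Type*} [Fintype n] [CommSemiring R]
    (P : Matrix n n R) (x y : n → R) : ∑ i, ∑ j, P i j * x i * y j = x ⬝ᵥ P *ᵥ y := by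
  simp only [dotProduct, mulVec, Finset.mul_sum]
  exact Finset.sum_congr rfl fun i _ => Finset.sum_congr rfl fun j _ => by ring

lemma exists_eq_smul_of_forall_mul_eq_mul {n K : Type*} [Field K] {v w : n → K} (hv : v ≠ 0)
    (h : ∀ i k, w i * v k = w k * v i) : ∃ μ : K, w = μ • v := by
  obtain ⟨i, hi⟩ := Function.ne_iff.mp hv
  refine ⟨w i / v i, funext fun k => ?_⟩
  rw [Pi.smul_apply, smul_eq_mul, div_mul_eq_mul_div, eq_div_iff hi]
  exact h k i

section ScalarPlusRankOne

variable {n : Type*} [Fintype n] [DecidableEq n]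

lemma smul_one_add_smul_vecMulVec_mulVec (a b : ℝ) (v y : n → ℝ) :
    (a • 1 + b • vecMulVec v v) *ᵥ y = a • y + (b * (v ⬝ᵥ y)) • v := by
  rw [add_mulVec, smul_mulVec, smul_mulVec, one_mulVec, vecMulVec_mulVec, op_smul_eq_smul,
    mul_smul]

lemma vecMul_smul_one_add_smul_vecMulVec (a b : ℝ) (v y : n → ℝ) :
    y ᵥ* (a • 1 + b • vecMulVec v v) = a • y + (b * (y ⬝ᵥ v)) • v := by
  rw [vecMul_add, vecMul_smul, vecMul_smul, vecMul_one, vecMul_vecMulVec, mul_smul]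

lemma trace_smul_one_add_smul_vecMulVec (a b : ℝ) (v : n → ℝ) :
    trace (a • 1 + b • vecMulVec v v) = a * Fintype.card n + b * (v ⬝ᵥ v) := by
  simp

lemma Matrix.ext_of_dotProduct_mulVec {A B : Matrix n n ℝ}
    (h : ∀ x y, x ⬝ᵥ A *ᵥ y = x ⬝ᵥ B *ᵥ y) : A = B :=
  Matrix.toBilin'.injective <| LinearMap.ext₂ fun x y => by
    simpa only [Matrix.toBilin'_apply'] using h x y

theorem eq_smul_one_add_smul_vecMulVec {P : Matrix n n ℝ} (hP : P.IsSymm) {v : n → ℝ}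
    (hv : v ≠ 0) {μ τ : ℝ} (hμ : P *ᵥ v = μ • v)
    (hτ : ∀ x y, x ⬝ᵥ v = 0 → y ⬝ᵥ v = 0 → x ⬝ᵥ P *ᵥ y = τ * (x ⬝ᵥ y)) :
    P = τ • 1 + ((μ - τ) / (v ⬝ᵥ v)) • vecMulVec v v := by
  have hS : v ⬝ᵥ v ≠ 0 := dotProduct_self_eq_zero.not.2 hv
  have hvP : v ᵥ* P = μ • v := by rw [← mulVec_transpose, hP, hμ]
  set proj : (n → ℝ) → n → ℝ := fun x => x - (x ⬝ᵥ v / (v ⬝ᵥ v)) • v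
  have hproj (x : n → ℝ) : proj x ⬝ᵥ v = 0 := by
    simp only [proj, sub_dotProduct, smul_dotProduct, smul_eq_mul]
    field_simp
    ring
  refine Matrix.ext_of_dotProduct_mulVec fun x y => ?_
  have h := hτ (proj x) (proj y) (hproj x) (hproj y)
  simp only [proj, dotProduct_mulVec, sub_vecMul, smul_vecMul, hvP, dotProduct_sub,
    sub_dotProduct, dotProduct_smul, smul_dotProduct, smul_eq_mul] at h
  rw [smul_one_add_smul_vecMulVec_mulVec, dotProduct_add, dotProduct_smul, dotProduct_smul,
    smul_eq_mul, smul_eq_mul, dotProduct_mulVec, dotProduct_comm v y]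
  have hxPv : x ᵥ* P ⬝ᵥ v = μ * (x ⬝ᵥ v) := by
    rw [← dotProduct_mulVec, hμ, dotProduct_smul, smul_eq_mul]
  rw [hxPv, dotProduct_comm v y] at h
  field_simp at h ⊢
  linear_combination h

theorem exists_eq_smul_one_add_smul_vecMulVec_iff (hn : Fintype.card n ≠ 1) {P : Matrix n n ℝ}
    (hP : P.IsSymm) {v : n → ℝ} (hv : v ≠ 0) :
    (∃ a b : ℝ, P = a • 1 + b • vecMulVec v v) ↔
      (∃ μ : ℝ, P *ᵥ v = μ • v) ∧
        ∀ x y, x ⬝ᵥ v = 0 → y ⬝ᵥ v = 0 →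
          x ⬝ᵥ P *ᵥ y =
            ((P.trace - v ⬝ᵥ P *ᵥ v / (v ⬝ᵥ v)) / (Fintype.card n - 1)) * (x ⬝ᵥ y) := by
  constructor
  · rintro ⟨a, b, rfl⟩
    have hS : v ⬝ᵥ v ≠ 0 := dotProduct_self_eq_zero.not.2 hv
    have hn' : (Fintype.card n : ℝ) - 1 ≠ 0 := sub_ne_zero.2 (mod_cast hn)
    simp only [smul_one_add_smul_vecMulVec_mulVec, trace_smul_one_add_smul_vecMulVec,
      dotProduct_add, dotProduct_smul, smul_eq_mul]
    refine ⟨⟨a + b * (v ⬝ᵥ v), by rw [add_smul, mul_smul]⟩, fun x y _ hy => ?_⟩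
    rw [dotProduct_comm v y, hy]
    field_simp
    ring
  · rintro ⟨⟨μ, hμ⟩, hτ⟩
    exact ⟨_, _, eq_smul_one_add_smul_vecMulVec hP hv hμ hτ⟩

end ScalarPlusRankOne

section Dt

variable {m : ℕ}

lemma kdelta_eq_one_apply (i j : Fin m) : kdelta m i j = (1 : Matrix (Fin m) (Fin m) ℝ) i j :=
  rfl

lemma Dt_eq (P : Matrix (Fin m) (Fin m) ℝ) (v : Fin m → ℝ) (i j k : Fin m) :
    Dt m P v i j k = ((m : ℝ) - 2)⁻¹ * (v k * P i j - v j * P i k +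
      ((m : ℝ) - 1)⁻¹ * ((v ᵥ* P - P.trace • v) k * (1 : Matrix (Fin m) (Fin m) ℝ) i j
        - (v ᵥ* P - P.trace • v) j * (1 : Matrix (Fin m) (Fin m) ℝ) i k)) := by
  have hsum : ∑ l, v l * (P l k * kdelta m i j - P l j * kdelta m i k)
      = (v ᵥ* P) k * kdelta m i j - (v ᵥ* P) j * kdelta m i k := by
    simp only [vecMul, dotProduct, mul_sub, Finset.sum_sub_distrib, Finset.sum_mul, mul_assoc]
  unfold Dt
  rw [hsum]
  simp only [kdelta_eq_one_apply, trace, diag, Pi.sub_apply, Pi.smul_apply, smul_eq_mul]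
  ring

lemma Dt_smul_one_add_smul_vecMulVec (hm : m ≠ 1) (a b : ℝ) (v : Fin m → ℝ) (i j k : Fin m) :
    Dt m (a • 1 + b • vecMulVec v v : Matrix (Fin m) (Fin m) ℝ) v i j k = 0 := by
  have hm' : (m : ℝ) - 1 ≠ 0 := sub_ne_zero.2 (mod_cast hm)
  rw [Dt_eq, vecMul_smul_one_add_smul_vecMulVec, trace_smul_one_add_smul_vecMulVec,
    Fintype.card_fin]
  simp only [Pi.sub_apply, Pi.add_apply, Pi.smul_apply, smul_eq_mul, Matrix.add_apply,
    Matrix.smul_apply, vecMulVec_apply]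
  field_simp
  ring

lemma dotProduct_self_mul_eq_of_Dt_eq_zero (hm : m ≠ 2) {P : Matrix (Fin m) (Fin m) ℝ}
    {v : Fin m → ℝ} (hD : ∀ i j k, Dt m P v i j k = 0) (i k : Fin m) :
    (v ⬝ᵥ v) * P i k = (P *ᵥ v) i * v k + ((m : ℝ) - 1)⁻¹ *
      (v i * (v ᵥ* P - P.trace • v) k
        - (v ⬝ᵥ (v ᵥ* P - P.trace • v)) * (1 : Matrix (Fin m) (Fin m) ℝ) i k) := by
  have hm' : ((m : ℝ) - 2)⁻¹ ≠ 0 := inv_ne_zero (sub_ne_zero.2 (mod_cast hm))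
  set u := v ᵥ* P - P.trace • v
  have hB (j : Fin m) : v k * P i j - v j * P i k
      + ((m : ℝ) - 1)⁻¹ * (u k * (1 : Matrix (Fin m) (Fin m) ℝ) i j
        - u j * (1 : Matrix (Fin m) (Fin m) ℝ) i k) = 0 := by
    simpa only [Dt_eq, mul_eq_zero, hm', false_or] using hD i j k
  have hrow : v k • P i - P i k • v + ((m : ℝ) - 1)⁻¹ •
      (u k • Pi.single i 1 - (1 : Matrix (Fin m) (Fin m) ℝ) i k • u) = 0 := by
    funext j
    simp only [Pi.add_apply, Pi.sub_apply, Pi.smul_apply, smul_eq_mul, Pi.zero_apply,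
      ← one_eq_pi_single]
    linear_combination hB j
  have hcontr := congrArg (v ⬝ᵥ ·) hrow
  simp only [dotProduct_add, dotProduct_sub, dotProduct_smul, dotProduct_single_one,
    dotProduct_zero, smul_eq_mul, dotProduct_comm v (P i)] at hcontr
  rw [show P i ⬝ᵥ v = (P *ᵥ v) i from rfl] at hcontr
  linear_combination -hcontr

theorem exists_eq_smul_one_add_smul_vecMulVec_of_Dt_eq_zero (hm : 3 ≤ m)
    {P : Matrix (Fin m) (Fin m) ℝ} (hP : P.IsSymm) {v : Fin m → ℝ} (hv : v ≠ 0)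
    (hD : ∀ i j k, Dt m P v i j k = 0) : ∃ a b : ℝ, P = a • 1 + b • vecMulVec v v := by
  have hS : v ⬝ᵥ v ≠ 0 := dotProduct_self_eq_zero.not.2 hv
  have hm1 : (m : ℝ) - 1 ≠ 0 := sub_ne_zero.2 (mod_cast (by omega : m ≠ 1))
  have hm2 : (m : ℝ) - 2 ≠ 0 := sub_ne_zero.2 (mod_cast (by omega : m ≠ 2))
  have hvP : v ᵥ* P = P *ᵥ v := by rw [← mulVec_transpose, hP]
  have hcontr := dotProduct_self_mul_eq_of_Dt_eq_zero (by omega) hD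
  simp only [hvP, Pi.sub_apply, Pi.smul_apply, smul_eq_mul] at hcontr
  have hw (i k : Fin m) : (P *ᵥ v) i * v k = (P *ᵥ v) k * v i := by
    have h := hcontr i k
    have h' := hcontr k i
    rw [hP.apply, isSymm_one.apply] at h'
    field_simp at h h'
    have : ((m : ℝ) - 2) * ((P *ᵥ v) i * v k - (P *ᵥ v) k * v i) = 0 := by
      linear_combination h' - h
    linear_combination (mul_eq_zero.1 this).resolve_left hm2
  obtain ⟨μ, hμ⟩ := exists_eq_smul_of_forall_mul_eq_mul hv hw
  refine ⟨((m : ℝ) - 1)⁻¹ * (P.trace - μ),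
    (μ + ((m : ℝ) - 1)⁻¹ * (μ - P.trace)) / (v ⬝ᵥ v), ?_⟩
  ext i k
  have h := hcontr i k
  simp only [hμ, dotProduct_sub, dotProduct_smul, Pi.smul_apply, smul_eq_mul] at h
  simp only [Matrix.add_apply, Matrix.smul_apply, vecMulVec_apply, smul_eq_mul]
  field_simp at h ⊢
  linear_combination h

theorem Dt_eq_zero_iff_exists_eq_smul_one_add_smul_vecMulVec (hm : 3 ≤ m)
    {P : Matrix (Fin m) (Fin m) ℝ} (hP : P.IsSymm) {v : Fin m → ℝ} (hv : v ≠ 0) :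
    (∀ i j k, Dt m P v i j k = 0) ↔ ∃ a b : ℝ, P = a • 1 + b • vecMulVec v v := by
  refine ⟨exists_eq_smul_one_add_smul_vecMulVec_of_Dt_eq_zero hm hP hv, ?_⟩
  rintro ⟨a, b, rfl⟩
  exact Dt_smul_one_add_smul_vecMulVec (by omega) a b v

end Dt

/-- `D(P,v) = 0` if and only if `v` is an eigenvector of `P` and `P` restricted to the
orthogonal complement of `v` is `τ` times the inner product, where
`τ = ((Σ_l P_{ll}) − (Σ_{l,k} P_{lk}v_lv_k)/|v|²)/(m−1)`. -/
theorem Dt_eq_zero_iff (m : ℕ) (hm : 3 ≤ m) (P : Fin m → Fin m → ℝ)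
    (hP : ∀ i j, P i j = P j i) (v : Fin m → ℝ) (hv : v ≠ 0) :
    (∀ i j k, Dt m P v i j k = 0) ↔
      ((∃ μ : ℝ, ∀ i, (∑ l, P i l * v l) = μ * v i) ∧
        (∀ x y : Fin m → ℝ, (∑ i, x i * v i) = 0 → (∑ i, y i * v i) = 0 →
          (∑ i, ∑ j, P i j * x i * y j) =
            (((∑ l, P l l) - (∑ l, ∑ k, P l k * v l * v k) / (∑ i, v i * v i))
                / ((m : ℝ) - 1)) *
              ∑ i, x i * y i)) := by
  have hPs : Matrix.IsSymm P := IsSymm.ext fun i j => hP j i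
  rw [Dt_eq_zero_iff_exists_eq_smul_one_add_smul_vecMulVec hm hPs hv,
    exists_eq_smul_one_add_smul_vecMulVec_iff (by rw [Fintype.card_fin]; omega) hPs hv,
    Fintype.card_fin]
  simp only [sum_sum_mul_mul_eq_dotProduct_mulVec P, funext_iff, Pi.smul_apply, smul_eq_mul]
  rfl
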